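/- (Appendix B, term (c).) On a probability space, let x₀ be a square-integrable ℝ^n-valued random vector and (η_l)_{l≥1} ℝ^n-valued square-integrable random vectors with E[η_l] = 0 and Cov(η_l) = I_n, with x₀, η₁, η₂, … mutually independent. Let A, β be deterministic n×n real matrices, (u_l)_{l≥1} deterministic vectors in ℝ^n, and define x_s = u_s + A x_{s−1} + β η_s for s ≥ 1. Let 0 ≤ h < t and let M_1, …, M_t and N_1, …, N_{t−h} be deterministic n×n real matrices. Then Cov(Σ_{l=1}^{t} M_l η_l, Σ_{k=1}^{t−h} N_k x_{k−1}) = Σ_{l=1}^{t−h} M_l (Σ_{k=l+1}^{t−h} N_k A^{k−1−l} β)ᵀ, where inner empty sums are zero. -/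

import Mathlib

/-!
Covariance is bilinear, so the left-hand side expands into
`∑ₗ ∑ₖ M_l Cov(η_l, x_{k-1}) N_kᵀ`. Unrolling the recursion one step at a time,
`Cov(η_l, x_{m+1}) = Cov(η_l, x_m) Aᵀ + Cov(η_l, η_{m+1}) βᵀ`, and independence together with
`Cov(η_l) = I` give `Cov(η_l, x_m) = (A^{m-l} β)ᵀ` for `l ≤ m` and `0` for `m < l`.
What remains is reindexing the double sum.
-/

open Matrix MeasureTheory ProbabilityTheory

/-- The `a × b` covariance matrix `Cov(X, Y) = E[(X − E X)(Y − E Y)ᵀ]` of two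
square-integrable random vectors. -/
noncomputable def covMatrix {Ω : Type*} [MeasureSpace Ω] {a b : ℕ}
    (X : Ω → Fin a → ℝ) (Y : Ω → Fin b → ℝ) : Matrix (Fin a) (Fin b) ℝ :=
  Matrix.of fun i j => ∫ ω, (X ω i - ∫ ω', X ω' i) * (Y ω j - ∫ ω', Y ω' j)

open Finset

lemma MeasureTheory.MemLp.mulVec {Ω ι κ : Type*} [Fintype ι] [Fintype κ]
    {_ : MeasurableSpace Ω} {μ : Measure Ω} {p : ENNReal} {X : Ω → κ → ℝ} (hX : MemLp X p μ)
    (M : Matrix ι κ ℝ) : MemLp (fun ω => M *ᵥ X ω) p μ :=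
  (LinearMap.toContinuousLinearMap (Matrix.mulVecLin M)).comp_memLp' hX

section covMatrix

variable {Ω : Type*} [MeasureSpace Ω] {a b c d : ℕ}

lemma covMatrix_apply (X : Ω → Fin a → ℝ) (Y : Ω → Fin b → ℝ) (i : Fin a) (j : Fin b) :
    covMatrix X Y i j = cov[fun ω => X ω i, fun ω => Y ω j] := rfl

lemma covMatrix_comm (X : Ω → Fin a → ℝ) (Y : Ω → Fin b → ℝ) :
    covMatrix X Y = (covMatrix Y X)ᵀ := by
  ext i j
  exact covariance_comm _ _

lemma ProbabilityTheory.IndepFun.covMatrix_eq_zero {X : Ω → Fin a → ℝ} {Y : Ω → Fin b → ℝ}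
    (h : IndepFun X Y ℙ) (hX : MemLp X 2 ℙ) (hY : MemLp Y 2 ℙ) : covMatrix X Y = 0 := by
  ext i j
  exact (h.comp (measurable_pi_apply i) (measurable_pi_apply j)).covariance_eq_zero
    (hX.eval i) (hY.eval j)

lemma covMatrix_const_add_right [IsProbabilityMeasure (ℙ : Measure Ω)] (X : Ω → Fin a → ℝ)
    {Y : Ω → Fin b → ℝ} (hY : Integrable Y ℙ) (v : Fin b → ℝ) :
    covMatrix X (fun ω => v + Y ω) = covMatrix X Y := by
  ext i j
  exact covariance_const_add_right (hY.eval j) (v j)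

variable [IsFiniteMeasure (ℙ : Measure Ω)]

lemma covMatrix_add_right {X : Ω → Fin a → ℝ} {Y Z : Ω → Fin b → ℝ} (hX : MemLp X 2 ℙ)
    (hY : MemLp Y 2 ℙ) (hZ : MemLp Z 2 ℙ) :
    covMatrix X (fun ω => Y ω + Z ω) = covMatrix X Y + covMatrix X Z := by
  ext i j
  exact covariance_add_right (hX.eval i) (hY.eval j) (hZ.eval j)

lemma covMatrix_mulVec_left {X : Ω → Fin a → ℝ} {Y : Ω → Fin b → ℝ} (hX : MemLp X 2 ℙ)
    (hY : MemLp Y 2 ℙ) (M : Matrix (Fin c) (Fin a) ℝ) :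
    covMatrix (fun ω => M *ᵥ X ω) Y = M * covMatrix X Y := by
  ext i j
  simp only [covMatrix_apply, mulVec, dotProduct, mul_apply]
  rw [covariance_fun_sum_left (fun p => (hX.eval p).const_mul (M i p)) (hY.eval j)]
  simp only [covariance_const_mul_left]

lemma covMatrix_mulVec_right {X : Ω → Fin a → ℝ} {Y : Ω → Fin b → ℝ} (hX : MemLp X 2 ℙ)
    (hY : MemLp Y 2 ℙ) (N : Matrix (Fin c) (Fin b) ℝ) :
    covMatrix X (fun ω => N *ᵥ Y ω) = covMatrix X Y * Nᵀ := by
  rw [covMatrix_comm, covMatrix_mulVec_left hY hX, transpose_mul, ← covMatrix_comm]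

lemma covMatrix_sum_left {ι : Type*} (s : Finset ι) {X : ι → Ω → Fin a → ℝ}
    {Y : Ω → Fin b → ℝ} (hX : ∀ k ∈ s, MemLp (X k) 2 ℙ) (hY : MemLp Y 2 ℙ) :
    covMatrix (fun ω => ∑ k ∈ s, X k ω) Y = ∑ k ∈ s, covMatrix (X k) Y := by
  ext i j
  simp only [covMatrix_apply, Finset.sum_apply, Matrix.sum_apply]
  exact covariance_fun_sum_left' (fun k hk => (hX k hk).eval i) (hY.eval j)

lemma covMatrix_sum_right {ι : Type*} (s : Finset ι) {X : Ω → Fin a → ℝ}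
    {Y : ι → Ω → Fin b → ℝ} (hX : MemLp X 2 ℙ) (hY : ∀ k ∈ s, MemLp (Y k) 2 ℙ) :
    covMatrix X (fun ω => ∑ k ∈ s, Y k ω) = ∑ k ∈ s, covMatrix X (Y k) := by
  rw [covMatrix_comm, covMatrix_sum_left s hY hX, transpose_sum]
  simp only [← covMatrix_comm]

lemma covMatrix_sum_mulVec_sum_mulVec {ι κ : Type*} (s : Finset ι) (s' : Finset κ)
    {X : ι → Ω → Fin a → ℝ} {Y : κ → Ω → Fin b → ℝ} (hX : ∀ l ∈ s, MemLp (X l) 2 ℙ)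
    (hY : ∀ k ∈ s', MemLp (Y k) 2 ℙ) (M : ι → Matrix (Fin c) (Fin a) ℝ)
    (N : κ → Matrix (Fin d) (Fin b) ℝ) :
    covMatrix (fun ω => ∑ l ∈ s, M l *ᵥ X l ω) (fun ω => ∑ k ∈ s', N k *ᵥ Y k ω) =
      ∑ l ∈ s, ∑ k ∈ s', M l * covMatrix (X l) (Y k) * (N k)ᵀ := by
  have hNY : ∀ k ∈ s', MemLp (fun ω => N k *ᵥ Y k ω) 2 ℙ := fun k hk => (hY k hk).mulVec _
  rw [covMatrix_sum_left _ (fun l hl => (hX l hl).mulVec (M l)) (memLp_finsetSum _ hNY)]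
  refine sum_congr rfl fun l hl => ?_
  rw [covMatrix_mulVec_left (hX l hl) (memLp_finsetSum _ hNY),
    covMatrix_sum_right _ (hX l hl) hNY, Matrix.mul_sum]
  refine sum_congr rfl fun k hk => ?_
  rw [covMatrix_mulVec_right (hX l hl) (hY k hk), Matrix.mul_assoc]

end covMatrix

lemma sum_Icc_sum_Icc_ite_le_pred {R : Type*} [AddCommMonoid R] {K t : ℕ} (hKt : K ≤ t)
    (f : ℕ → ℕ → R) :
    ∑ l ∈ Icc 1 t, ∑ k ∈ Icc 1 K, (if l ≤ k - 1 then f l k else 0) =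
      ∑ l ∈ Icc 1 K, ∑ k ∈ Icc (l + 1) K, f l k := by
  have hinner : ∀ l ∈ Icc 1 t,
      ∑ k ∈ Icc 1 K, (if l ≤ k - 1 then f l k else 0) = ∑ k ∈ Icc (l + 1) K, f l k := by
    intro l hl
    rw [← sum_filter]
    congr 1
    ext k
    simp only [mem_filter, mem_Icc] at hl ⊢
    omega
  rw [sum_congr rfl hinner]
  refine (sum_subset (Icc_subset_Icc_right hKt) fun l hlt hlK => ?_).symm
  simp only [mem_Icc] at hlt hlK
  rw [Icc_eq_empty (by omega), sum_empty]

section LinearRecursion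

variable {Ω : Type*} {n : ℕ} {A β : Matrix (Fin n) (Fin n) ℝ} {u : ℕ → Fin n → ℝ}
  {η x : ℕ → Ω → Fin n → ℝ}

lemma memLp_of_linear_recursion {_ : MeasurableSpace Ω} {μ : Measure Ω} [IsFiniteMeasure μ]
    {p : ENNReal} (hx0 : MemLp (x 0) p μ) (hη : ∀ s, 1 ≤ s → MemLp (η s) p μ)
    (hxrec : ∀ s ω, x (s + 1) ω = u (s + 1) + A *ᵥ x s ω + β *ᵥ η (s + 1) ω) (m : ℕ) :
    MemLp (x m) p μ := by
  induction m with
  | zero => exact hx0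
  | succ m ih =>
    have hdrift : MemLp (fun ω => u (m + 1) + A *ᵥ x m ω) p μ :=
      (memLp_const (u (m + 1))).add (ih.mulVec A)
    rw [funext (hxrec m)]
    exact hdrift.add ((hη _ m.succ_pos).mulVec β)

lemma covMatrix_noise_state [MeasureSpace Ω] [IsProbabilityMeasure (ℙ : Measure Ω)] {l : ℕ}
    (hl : 1 ≤ l) (hx0 : MemLp (x 0) 2 ℙ) (hη : ∀ s, 1 ≤ s → MemLp (η s) 2 ℙ)
    (hxrec : ∀ s ω, x (s + 1) ω = u (s + 1) + A *ᵥ x s ω + β *ᵥ η (s + 1) ω)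
    (hcov_init : covMatrix (η l) (x 0) = 0)
    (hcov_noise : ∀ s, 1 ≤ s → covMatrix (η l) (η s) = if l = s then 1 else 0) (m : ℕ) :
    covMatrix (η l) (x m) = if l ≤ m then (A ^ (m - l) * β)ᵀ else 0 := by
  have hxL2 := memLp_of_linear_recursion hx0 hη hxrec
  induction m with
  | zero => rw [hcov_init, if_neg (by omega)]
  | succ m ih =>
    have hηl := hη l hl
    have hdrift : MemLp (fun ω => u (m + 1) + A *ᵥ x m ω) 2 ℙ :=
      (memLp_const (u (m + 1))).add ((hxL2 m).mulVec A)
    rw [funext (hxrec m), covMatrix_add_right hηl hdrift ((hη _ m.succ_pos).mulVec β),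
      covMatrix_const_add_right _ (((hxL2 m).mulVec A).integrable one_le_two),
      covMatrix_mulVec_right hηl (hxL2 m), covMatrix_mulVec_right hηl (hη _ m.succ_pos), ih,
      hcov_noise _ m.succ_pos]
    rcases lt_trichotomy l (m + 1) with hlt | rfl | hgt
    · rw [if_pos (Nat.le_of_lt_succ hlt), if_pos hlt.le, if_neg hlt.ne, zero_mul, add_zero,
        ← transpose_mul, ← mul_assoc, ← pow_succ', Nat.sub_add_comm (Nat.le_of_lt_succ hlt)]
    · simp
    · rw [if_neg (by omega), if_neg hgt.ne', if_neg (by omega), zero_mul, zero_mul, add_zero]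

end LinearRecursion

theorem cov_noise_state_sums_general {Ω : Type*} [MeasureSpace Ω]
    [IsProbabilityMeasure (ℙ : Measure Ω)] {n : ℕ} {t h : ℕ}
    (x₀ : Ω → Fin n → ℝ) (η : ℕ → Ω → Fin n → ℝ)
    (hx₀L2 : MemLp x₀ 2 ℙ)
    (hηL2 : ∀ l : ℕ, 1 ≤ l → MemLp (η l) 2 ℙ)
    (hηcov : ∀ l : ℕ, 1 ≤ l → covMatrix (η l) (η l) = 1)
    -- x₀, η₁, η₂, … mutually independent
    (hindep : iIndepFun
      (fun l : ℕ => if l = 0 then x₀ else η l) ℙ)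
    (A β : Matrix (Fin n) (Fin n) ℝ) (u : ℕ → Fin n → ℝ)
    (x : ℕ → Ω → Fin n → ℝ)
    (hx0 : x 0 = x₀)
    (hxrec : ∀ s : ℕ, ∀ ω, x (s + 1) ω = u (s + 1) + A *ᵥ x s ω + β *ᵥ η (s + 1) ω)
    (M N : ℕ → Matrix (Fin n) (Fin n) ℝ) :
    covMatrix (fun ω => ∑ l ∈ Finset.Icc 1 t, M l *ᵥ η l ω)
        (fun ω => ∑ k ∈ Finset.Icc 1 (t - h), N k *ᵥ x (k - 1) ω) =
      ∑ l ∈ Finset.Icc 1 (t - h),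
        M l * (∑ k ∈ Finset.Icc (l + 1) (t - h), N k * A ^ (k - 1 - l) * β)ᵀ := by
  subst hx0
  have hcov : ∀ l ∈ Icc 1 t, ∀ m,
      covMatrix (η l) (x m) = if l ≤ m then (A ^ (m - l) * β)ᵀ else 0 := by
    intro l hl m
    have hl : 1 ≤ l := (mem_Icc.mp hl).1
    have hl0 : l ≠ 0 := by omega
    refine covMatrix_noise_state hl hx₀L2 hηL2 hxrec ?_ (fun s hs => ?_) m
    · have hind := hindep.indepFun hl0
      simp only [if_neg hl0] at hind
      exact hind.covMatrix_eq_zero (hηL2 l hl) hx₀L2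
    · split_ifs with hls
      · exact hls ▸ hηcov l hl
      · have hind := hindep.indepFun hls
        simp only [if_neg hl0, if_neg (show s ≠ 0 by omega)] at hind
        exact hind.covMatrix_eq_zero (hηL2 l hl) (hηL2 s hs)
  calc _ = ∑ l ∈ Icc 1 t, ∑ k ∈ Icc 1 (t - h),
          M l * covMatrix (η l) (x (k - 1)) * (N k)ᵀ :=
        covMatrix_sum_mulVec_sum_mulVec _ _ (fun l hl => hηL2 l (mem_Icc.mp hl).1)
          (fun k _ => memLp_of_linear_recursion hx₀L2 hηL2 hxrec (k - 1)) M N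
    _ = ∑ l ∈ Icc 1 t, ∑ k ∈ Icc 1 (t - h),
          if l ≤ k - 1 then M l * (N k * A ^ (k - 1 - l) * β)ᵀ else 0 := by
        refine sum_congr rfl fun l hl => sum_congr rfl fun k _ => ?_
        rw [hcov l hl]
        split_ifs <;> simp [transpose_mul, mul_assoc]
    _ = _ := by
        rw [sum_Icc_sum_Icc_ite_le_pred (Nat.sub_le t h)]
        simp only [transpose_sum, mul_sum]

/-- Appendix B, term (c):
`Cov(Σ_{l=1}^t M_l η_l, Σ_{k=1}^{t-h} N_k x_{k-1}) = Σ_{l=1}^{t-h} M_l (Σ_{k=l+1}^{t-h} N_k A^{k-1-l} β)ᵀ`. -/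
theorem cov_noise_state_sums {Ω : Type*} [MeasureSpace Ω]
    [IsProbabilityMeasure (ℙ : Measure Ω)] {n : ℕ} {t h : ℕ} (hht : h < t)
    (x₀ : Ω → Fin n → ℝ) (η : ℕ → Ω → Fin n → ℝ)
    (hx₀L2 : MemLp x₀ 2 ℙ)
    (hηL2 : ∀ l : ℕ, 1 ≤ l → MemLp (η l) 2 ℙ)
    (hηmean : ∀ l : ℕ, 1 ≤ l → ∀ i, (∫ ω, η l ω i) = 0)
    (hηcov : ∀ l : ℕ, 1 ≤ l → covMatrix (η l) (η l) = 1)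
    -- x₀, η₁, η₂, … mutually independent
    (hindep : iIndepFun
      (fun l : ℕ => if l = 0 then x₀ else η l) ℙ)
    (A β : Matrix (Fin n) (Fin n) ℝ) (u : ℕ → Fin n → ℝ)
    (x : ℕ → Ω → Fin n → ℝ)
    (hx0 : x 0 = x₀)
    (hxrec : ∀ s : ℕ, ∀ ω, x (s + 1) ω = u (s + 1) + A *ᵥ x s ω + β *ᵥ η (s + 1) ω)
    (M N : ℕ → Matrix (Fin n) (Fin n) ℝ) :
    covMatrix (fun ω => ∑ l ∈ Finset.Icc 1 t, M l *ᵥ η l ω)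
        (fun ω => ∑ k ∈ Finset.Icc 1 (t - h), N k *ᵥ x (k - 1) ω) =
      ∑ l ∈ Finset.Icc 1 (t - h),
        M l * (∑ k ∈ Finset.Icc (l + 1) (t - h), N k * A ^ (k - 1 - l) * β)ᵀ :=
  cov_noise_state_sums_general x₀ η hx₀L2 hηL2 hηcov hindep A β u x hx0 hxrec M N
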